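/- Let N = 2M+2, let D be the N×N DFT matrix with entries D_{mn} = exp(−2πi(m−1)(n−1)/N), let s_t(i) = 1 and s_r(i) = (−1)^{i−1}·i_ℂ for 1 ≤ i ≤ N. Define V ∈ ℂ^{N×N} columnwise by: column 1 of V equals s_t (the all-ones vector), column m+1 equals (1/√2)·D_{:,m+1} for 1 ≤ m ≤ M, column M+2 equals s_r, and column M+2+m equals (1/√2)·D_{:,m+M+2} for 1 ≤ m ≤ M. Then VᴴV is a diagonal matrix, V is invertible, and Tr[(VᴴV)⁻¹] = (2M+1)/(M+1). -/

import Mathlib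

/-!
`V` is the DFT matrix with rescaled columns, `V = D * diagonal w`, where `w j = 1/√2` except
`w 0 = 1` and `w (M+1) = i`: column `0` of `D` is the all-ones vector `s_t`, and column `M+1`
is `(-1)^i`, so `s_r = i • D_{:,M+1}`. Orthogonality of the characters of `ℤ/N` gives
`Dᴴ D = N • 1`, hence `Vᴴ V = N • diagonal |w|²`, which is diagonal and invertible, with
`Tr[(Vᴴ V)⁻¹] = (1 + 1 + 2 · 2M) / N = (2M+1)/(M+1)`.
-/

open Matrix Finset Complex
open scoped Real

namespace IsPrimitiveRoot

variable {K : Type*} [Field K] {ζ : K} {N : ℕ}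

theorem geom_sum_zpow_eq_zero (hζ : IsPrimitiveRoot ζ N) {d : ℤ} (hd : ¬ (N : ℤ) ∣ d) :
    ∑ i ∈ range N, (ζ ^ d) ^ i = 0 := by
  have hne : ζ ^ d ≠ 1 := by rwa [Ne, hζ.zpow_eq_one_iff_dvd]
  rw [geom_sum_eq hne, ← zpow_natCast, ← _root_.zpow_mul, mul_comm, _root_.zpow_mul,
    zpow_natCast, hζ.pow_eq_one, _root_.one_zpow, sub_self, zero_div]

theorem sum_pow_mul_inv_pow (hζ : IsPrimitiveRoot ζ N) (j k : Fin N) :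
    ∑ i : Fin N, ζ ^ ((i : ℕ) * j) * (ζ ^ ((i : ℕ) * k))⁻¹ =
      if j = k then (N : K) else 0 := by
  have hζ0 : ζ ≠ 0 := hζ.ne_zero (Fin.pos j).ne'
  have hterm (i : ℕ) :
      ζ ^ (i * (j : ℕ)) * (ζ ^ (i * (k : ℕ)))⁻¹ = (ζ ^ ((j : ℤ) - k)) ^ i := by
    rw [← zpow_natCast, ← zpow_natCast, ← _root_.zpow_neg, ← zpow_add₀ hζ0,
      ← zpow_natCast (ζ ^ _), ← _root_.zpow_mul]
    push_cast
    ring_nf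
  simp_rw [hterm]
  split_ifs with hjk
  · simp [hjk]
  · rw [Fin.sum_univ_eq_sum_range (fun i => (ζ ^ ((j : ℤ) - k)) ^ i)]
    refine hζ.geom_sum_zpow_eq_zero fun hdvd => hjk (Fin.ext ?_)
    have hlt : |(j : ℤ) - k| < N := by rw [abs_lt]; omega
    have := Int.eq_zero_of_abs_lt_dvd hdvd hlt
    omega

end IsPrimitiveRoot

theorem conjTranspose_mul_self_mul_diagonal {R n : Type*} [CommRing R] [StarRing R] [Fintype n]
    [DecidableEq n] {A : Matrix n n R} {r : R} (hA : Aᴴ * A = r • 1) (c : n → R) :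
    (A * diagonal c)ᴴ * (A * diagonal c) = diagonal fun j => r * (star (c j) * c j) := by
  rw [conjTranspose_mul, diagonal_conjTranspose, Matrix.mul_assoc, ← Matrix.mul_assoc Aᴴ, hA,
    smul_mul, Matrix.one_mul, Matrix.mul_smul, diagonal_mul_diagonal, ← diagonal_smul]
  rfl

theorem inv_diagonal_of_ne_zero {K n : Type*} [Field K] [Fintype n] [DecidableEq n] {v : n → K}
    (hv : ∀ i, v i ≠ 0) : (diagonal v)⁻¹ = diagonal v⁻¹ := by
  refine inv_eq_right_inv ?_
  rw [diagonal_mul_diagonal, ← diagonal_one]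
  exact congrArg diagonal (funext fun i => mul_inv_cancel₀ (hv i))

theorem isUnit_of_conjTranspose_mul_self_eq_smul_one {K n : Type*} [Field K] [StarRing K]
    [Fintype n] [DecidableEq n] {A : Matrix n n K} {r : K} (hA : Aᴴ * A = r • 1)
    (hr : r ≠ 0) : IsUnit A :=
  (isUnit_iff_isUnit_det A).2 <| isUnit_det_of_left_inverse (B := r⁻¹ • Aᴴ) <| by
    rw [smul_mul, hA, smul_smul, inv_mul_cancel₀ hr, one_smul]

section DFT

variable {N : ℕ} {D : Matrix (Fin N) (Fin N) ℂ}

theorem dft_apply_eq_inv_pow (hD : ∀ j k : Fin N, D j k = exp (-2 * π * I * j * k / N))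
    (j k : Fin N) : D j k = (exp (2 * π * I / N) ^ ((j : ℕ) * k))⁻¹ := by
  rw [hD, ← exp_nat_mul, ← exp_neg]
  congr 1
  push_cast
  ring

theorem conjTranspose_mul_self_dft (hD : ∀ j k : Fin N, D j k = exp (-2 * π * I * j * k / N)) :
    Dᴴ * D = (N : ℂ) • 1 := by
  rcases Nat.eq_zero_or_pos N with rfl | hN
  · exact Subsingleton.elim _ _
  have hζ := isPrimitiveRoot_exp N hN.ne'
  have hstar (i j : Fin N) : star (D i j) = exp (2 * π * I / N) ^ ((i : ℕ) * j) := by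
    rw [dft_apply_eq_inv_pow hD, inv_eq_conj (by rw [norm_pow, hζ.norm'_eq_one hN.ne', one_pow])]
    exact conj_conj _
  ext j k
  simp only [mul_apply, conjTranspose_apply, hstar]
  simp only [dft_apply_eq_inv_pow hD, Matrix.smul_apply, one_apply, smul_eq_mul, mul_ite, mul_one,
    mul_zero]
  exact hζ.sum_pow_mul_inv_pow j k

theorem dft_apply_zero (hD : ∀ j k : Fin N, D j k = exp (-2 * π * I * j * k / N))
    (i : Fin N) (h : 0 < N) : D i ⟨0, h⟩ = 1 := by
  simp [hD]

theorem dft_apply_half (hD : ∀ j k : Fin N, D j k = exp (-2 * π * I * j * k / N))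
    (i k : Fin N) (hk : 2 * (k : ℕ) = N) : D i k = (-1) ^ (i : ℕ) := by
  have hk0 : (k : ℂ) ≠ 0 := by norm_cast; omega
  have harg : -2 * π * I * (i : ℕ) * (k : ℕ) / N = (i : ℕ) * -(π * I) := by
    rw [show (N : ℂ) = 2 * (k : ℕ) by exact_mod_cast hk.symm]; field_simp
  rw [hD, harg, exp_nat_mul, exp_neg, exp_pi_mul_I, inv_neg, inv_one]

end DFT

noncomputable def columnWeight (M : ℕ) (j : Fin (2 * M + 2)) : ℂ :=
  if (j : ℕ) = 0 then 1 else if (j : ℕ) = M + 1 then I else ((1 / Real.sqrt 2 : ℝ) : ℂ)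

theorem eq_dft_mul_diagonal_columnWeight {M : ℕ}
    {D V : Matrix (Fin (2 * M + 2)) (Fin (2 * M + 2)) ℂ}
    (hD : ∀ j k : Fin (2 * M + 2), D j k = exp (-2 * π * I * j * k / (2 * M + 2 : ℕ)))
    (hV0 : ∀ i, V i ⟨0, Nat.succ_pos _⟩ = 1)
    (hVt : ∀ (i) (m : Fin M),
      V i ⟨m.1 + 1, by linarith [m.isLt]⟩ =
        ((1 / Real.sqrt 2 : ℝ) : ℂ) * D i ⟨m.1 + 1, by linarith [m.isLt]⟩)
    (hVr0 : ∀ i, V i ⟨M + 1, by linarith⟩ = (-1 : ℂ) ^ (i : ℕ) * I)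
    (hVrm : ∀ (i) (m : Fin M),
      V i ⟨M + 2 + m.1, by linarith [m.isLt]⟩ =
        ((1 / Real.sqrt 2 : ℝ) : ℂ) * D i ⟨M + 2 + m.1, by linarith [m.isLt]⟩) :
    V = D * diagonal (columnWeight M) := by
  ext i ⟨j, hj⟩
  rw [mul_diagonal, columnWeight]
  dsimp only
  rcases Nat.eq_zero_or_pos j with rfl | hj0
  · rw [hV0, dft_apply_zero hD, if_pos rfl, mul_one]
  rcases lt_trichotomy j (M + 1) with hlt | rfl | hgt
  · obtain ⟨m, rfl⟩ : ∃ m, j = m + 1 := ⟨j - 1, by omega⟩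
    rw [if_neg (by omega), if_neg (by omega), hVt i ⟨m, by omega⟩, mul_comm]
  · rw [if_neg (by omega), if_pos rfl, hVr0, dft_apply_half hD _ _ (by simp; ring)]
  · obtain ⟨m, rfl⟩ : ∃ m, j = M + 2 + m := ⟨j - (M + 2), by omega⟩
    rw [if_neg (by omega), if_neg (by omega), hVrm i ⟨m, by omega⟩, mul_comm]

theorem columnWeight_ne_zero {M : ℕ} (j : Fin (2 * M + 2)) : columnWeight M j ≠ 0 := by
  unfold columnWeight
  split_ifs <;> simp

theorem inv_star_mul_self_columnWeight {M : ℕ} (j : Fin (2 * M + 2)) :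
    (star (columnWeight M j) * columnWeight M j)⁻¹ =
      2 - (if j = ⟨0, Nat.succ_pos _⟩ then 1 else 0) -
        (if j = ⟨M + 1, by linarith⟩ then 1 else 0) := by
  simp only [columnWeight, Fin.ext_iff]
  split_ifs <;> first | omega | norm_num [← ofReal_mul]

theorem sum_inv_star_mul_self_columnWeight (M : ℕ) :
    ∑ j, (star (columnWeight M j) * columnWeight M j)⁻¹ = 4 * M + 2 := by
  simp only [inv_star_mul_self_columnWeight, sum_sub_distrib, sum_ite_eq', mem_univ, if_true,
    sum_const, card_univ, Fintype.card_fin, nsmul_eq_mul]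
  push_cast
  ring

theorem trace_inv_diagonal_columnWeight (M : ℕ) :
    (diagonal fun j =>
        ((2 * M + 2 : ℕ) : ℂ) * (star (columnWeight M j) * columnWeight M j))⁻¹.trace =
      ((2 * M + 1 : ℝ) / (M + 1) : ℂ) := by
  have hN : ((2 * M + 2 : ℕ) : ℂ) ≠ 0 := Nat.cast_ne_zero.2 (by omega)
  rw [inv_diagonal_of_ne_zero fun j => ?_, trace_diagonal]
  · simp only [Pi.inv_apply, mul_inv ((2 * M + 2 : ℕ) : ℂ), ← mul_sum,
      sum_inv_star_mul_self_columnWeight]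
    push_cast
    field_simp
    ring
  · have hw := columnWeight_ne_zero j
    exact mul_ne_zero hN (mul_ne_zero (star_ne_zero.2 hw) hw)

/-- Let `N = 2M+2`, let `D` be the `N × N` DFT matrix (0-based entries
`D j k = exp(-2πi·jk/N)`), and let `s_t i = 1`, `s_r i = (-1)^i · I`.  Define `V`
columnwise (0-based): column `0` equals `s_t`, column `m+1` equals `(1/√2)` times
column `m+1` of `D` for `0 ≤ m < M`, column `M+1` equals `s_r`, and column `M+2+m`
equals `(1/√2)` times column `M+2+m` of `D`.  Then `VᴴV` is diagonal, `V` is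
invertible, and `Tr[(VᴴV)⁻¹] = (2M+1)/(M+1)`. -/
theorem es_practical_dft_measurement_matrix (M : ℕ)
    (D V : Matrix (Fin (2 * M + 2)) (Fin (2 * M + 2)) ℂ)
    (hD : ∀ j k : Fin (2 * M + 2),
      D j k = Complex.exp (-2 * Real.pi * Complex.I * (j : ℕ) * (k : ℕ) / (2 * M + 2)))
    (s_t s_r : Fin (2 * M + 2) → ℂ)
    (hst : ∀ i, s_t i = 1)
    (hsr : ∀ i, s_r i = (-1 : ℂ) ^ (i : ℕ) * Complex.I)
    (hV0 : ∀ i, V i ⟨0, by omega⟩ = s_t i)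
    (hVt : ∀ (i) (m : Fin M),
      V i ⟨m.1 + 1, by have := m.isLt; omega⟩ =
        ((1 / Real.sqrt 2 : ℝ) : ℂ) * D i ⟨m.1 + 1, by have := m.isLt; omega⟩)
    (hVr0 : ∀ i, V i ⟨M + 1, by omega⟩ = s_r i)
    (hVrm : ∀ (i) (m : Fin M),
      V i ⟨M + 2 + m.1, by have := m.isLt; omega⟩ =
        ((1 / Real.sqrt 2 : ℝ) : ℂ) * D i ⟨M + 2 + m.1, by have := m.isLt; omega⟩) :
    (Vᴴ * V).IsDiag ∧ IsUnit V ∧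
      ((Vᴴ * V)⁻¹).trace = ((2 * M + 1 : ℝ) / (M + 1) : ℂ) := by
  have hD' : ∀ j k : Fin (2 * M + 2), D j k = exp (-2 * π * I * j * k / (2 * M + 2 : ℕ)) := by
    push_cast
    exact hD
  have hDD := conjTranspose_mul_self_dft hD'
  have hV : V = D * diagonal (columnWeight M) :=
    eq_dft_mul_diagonal_columnWeight hD' (fun i => (hV0 i).trans (hst i)) hVt
      (fun i => (hVr0 i).trans (hsr i)) hVrm
  have hVV := conjTranspose_mul_self_mul_diagonal hDD (columnWeight M)
  rw [← hV] at hVV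
  refine ⟨hVV ▸ isDiag_diagonal _, ?_, hVV ▸ trace_inv_diagonal_columnWeight M⟩
  rw [hV]
  exact (isUnit_of_conjTranspose_mul_self_eq_smul_one hDD (Nat.cast_ne_zero.2 (by omega))).mul
    (isUnit_diagonal.2 (Pi.isUnit_iff.2 fun j => (columnWeight_ne_zero j).isUnit))
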